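/- Let A be an affine space over a finite-dimensional real vector space T, let t ⊆ T be a linear subspace of translations, and let q be a finite-dimensional Lie algebra of affine vector fields on A containing the constant vector fields given by t. Suppose that at some point a ∈ A the evaluation map q → T_a A = T has image equal to t. If q normalizes the abelian algebra of infinitesimal translations (i.e., [ξ, v] is a translation for every ξ ∈ q and every translation field v), then the orbit of a under the connected group generated by q coincides with the orbit of a under exp(t), which is the affine subspace a + t. -/

import Mathlib

open Relation

variable {T : Type*} [NormedAddCommGroup T] [NormedSpace ℝ T] [FiniteDimensional ℝ T]

/-- One point flows to another along the time-one flow of a vector field belonging to a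
given family `F` of affine vector fields on `T`. -/
def FlowStep (F : Set (T →ᵃ[ℝ] T)) (x y : T) : Prop :=
  ∃ ξ ∈ F, ∃ γ : ℝ → T, γ 0 = x ∧ γ 1 = y ∧ ∀ s : ℝ, HasDerivAt γ (ξ (γ s)) s

/-- The orbit relation of the (connected) group generated by the family `F` of affine
vector fields: reachability by finitely many flow steps. -/
def Reaches (F : Set (T →ᵃ[ℝ] T)) : T → T → Prop :=
  Relation.ReflTransGen (FlowStep F)

/-!
Every `ξ ∈ q` is tangent to the affine subspace `a + t`: `ξ a ∈ t` and `ξ.linear` preserves `t`.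
Pushed to `T ⧸ t`, the displacement `γ s - a` of an integral curve `γ` of `ξ` therefore solves the
linear ODE `f' = L f` with `L` induced by `ξ.linear`; if it starts at `0` it stays at `0`, so the
flows of `q` never leave `a + t`. Conversely every point of `a + t` is reached in one step along a
constant field of `t ⊆ q`.
-/

section

variable {E : Type*} [NormedAddCommGroup E] [NormedSpace ℝ E]

theorem ODE_solution_eq_zero_of_linear {L : E →L[ℝ] E} {f : ℝ → E} {s₀ : ℝ}
    (hf : ∀ s, HasDerivAt f (L (f s)) s) (h₀ : f s₀ = 0) : f = 0 :=
  ODE_solution_unique_univ (v := fun _ => L) (s := fun _ => Set.univ)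
    (fun _ => L.lipschitz.lipschitzOnWith) (fun s => ⟨hf s, trivial⟩)
    (fun _ => ⟨by simp, trivial⟩) h₀

theorem AffineMap.sub_mem_of_hasDerivAt [FiniteDimensional ℝ E] {S : Submodule ℝ E}
    {ξ : E →ᵃ[ℝ] E} (hξS : S ≤ S.comap ξ.linear) {a : E} (ha : ξ a ∈ S) {γ : ℝ → E}
    (hγ : ∀ s, HasDerivAt γ (ξ (γ s)) s) {s₀ : ℝ} (h₀ : γ s₀ - a ∈ S) (s : ℝ) :
    γ s - a ∈ S := by
  have : IsClosed (S : Set E) := S.closed_of_finiteDimensional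
  let π : E →L[ℝ] E ⧸ S := S.mkQ.toContinuousLinearMap
  let L : E ⧸ S →L[ℝ] E ⧸ S := (S.mapQ S ξ.linear hξS).toContinuousLinearMap
  have hπξ (x : E) : π (ξ x) = L (π (x - a)) := by
    have hx : ξ x = ξ.linear (x - a) + ξ a := by
      rw [← vsub_eq_sub x a, ξ.linearMap_vsub, vsub_eq_sub, sub_add_cancel]
    simp [π, L, hx, (Submodule.Quotient.mk_eq_zero S).2 ha]
  have hf : ∀ s, HasDerivAt (fun s => π (γ s - a)) (L (π (γ s - a))) s := fun s =>
    hπξ (γ s) ▸ π.hasFDerivAt.comp_hasDerivAt s ((hγ s).sub_const a)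
  have hzero := ODE_solution_eq_zero_of_linear hf ((Submodule.Quotient.mk_eq_zero S).2 h₀)
  exact (Submodule.Quotient.mk_eq_zero S).1 (congrFun hzero s)

theorem Reaches.sub_mem [FiniteDimensional ℝ E] {F : Set (E →ᵃ[ℝ] E)} {S : Submodule ℝ E}
    {a x : E} (hF : ∀ ξ ∈ F, S ≤ S.comap ξ.linear ∧ ξ a ∈ S) (h : Reaches F a x) :
    x - a ∈ S := by
  induction h with
  | refl => simp
  | tail _ hstep ih =>
    obtain ⟨ξ, hξ, γ, rfl, rfl, hγ⟩ := hstep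
    exact AffineMap.sub_mem_of_hasDerivAt (hF ξ hξ).1 (hF ξ hξ).2 hγ ih 1

theorem Reaches.mono {F G : Set (E →ᵃ[ℝ] E)} (hFG : F ⊆ G) {x y : E} (h : Reaches F x y) :
    Reaches G x y :=
  ReflTransGen.mono (fun _ _ ⟨ξ, hξ, hγ⟩ => ⟨ξ, hFG hξ, hγ⟩) x y h

theorem flowStep_const {F : Set (E →ᵃ[ℝ] E)} {v : E} (hv : AffineMap.const ℝ E v ∈ F) (x : E) :
    FlowStep F x (x + v) :=
  ⟨_, hv, fun s => x + s • v, by simp, by simp,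
    fun s => by simpa using ((hasDerivAt_id s).smul_const v).const_add x⟩

theorem reaches_image_const_of_sub_mem {S : Set E} {a x : E} (hx : x - a ∈ S) :
    Reaches ((fun v => AffineMap.const ℝ E v) '' S) a x := by
  have hstep := flowStep_const (Set.mem_image_of_mem (fun v => AffineMap.const ℝ E v) hx) a
  rw [add_sub_cancel] at hstep
  exact ReflTransGen.single hstep

end

/-- Let `q` be a finite-dimensional Lie algebra of affine vector fields on
an affine space (modeled here on `T` itself) containing the constant fields of a subspace
`t ⊆ T`, normalizing the translations with values staying in `t` (i.e. `[ξ, v] = ξ.linear v ∈ t`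
for `ξ ∈ q`, `v ∈ t`), and whose evaluation at a point `a` has image exactly `t`. Then the
orbit of `a` under the connected group generated by `q` is the orbit of `a` under `exp(t)`,
namely the affine subspace `a + t`. -/
theorem stmt7 (q : Submodule ℝ (T →ᵃ[ℝ] T)) (t : Submodule ℝ T) (a : T)
    (hconst : ∀ v ∈ t, AffineMap.const ℝ T v ∈ q)
    (heval : {w : T | ∃ ξ ∈ q, ξ a = w} = (t : Set T))
    (hnorm : ∀ ξ ∈ q, ∀ v ∈ t, ξ.linear v ∈ t) :
    {x : T | Reaches (q : Set (T →ᵃ[ℝ] T)) a x} =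
      {x : T | Reaches ((fun v => AffineMap.const ℝ T v) '' (t : Set T)) a x} ∧
    {x : T | Reaches (q : Set (T →ᵃ[ℝ] T)) a x} = {x : T | x - a ∈ t} := by
  have hq_tangent : ∀ ξ ∈ q, t ≤ t.comap ξ.linear ∧ ξ a ∈ t := fun ξ hξ =>
    ⟨hnorm ξ hξ, heval.subset (⟨ξ, hξ, rfl⟩ : ∃ η ∈ q, η a = ξ a)⟩
  have htrans_le : (fun v => AffineMap.const ℝ T v) '' (t : Set T) ⊆ q := by
    rintro _ ⟨v, hv, rfl⟩
    exact hconst v hv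
  refine ⟨Set.ext fun x => ⟨fun h => ?_, Reaches.mono htrans_le⟩,
    Set.ext fun x => ⟨Reaches.sub_mem hq_tangent, fun h => ?_⟩⟩
  · exact reaches_image_const_of_sub_mem (Reaches.sub_mem hq_tangent h)
  · exact (reaches_image_const_of_sub_mem h).mono htrans_le
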